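/- Let μ be a compactly supported probability measure on ℝ^d and Σ a symmetric positive definite d×d matrix. Define p(x) := ∫ exp(−(1/2)(x − y)ᵀ Σ⁻¹ (x − y)) dμ(y), and for each x ∈ ℝ^d let μ_x be the probability measure with density proportional to exp(−(1/2)(x − y)ᵀ Σ⁻¹ (x − y)) with respect to μ. Then for every x ∈ ℝ^d the Hessian of log p satisfies ∇² log p(x) = Σ⁻¹ (Cov(μ_x) Σ⁻¹ − I), where Cov(μ_x) = E_{μ_x}[y yᵀ] − E_{μ_x}[y] E_{μ_x}[y]ᵀ is the covariance matrix of μ_x. In particular, in the isotropic case Σ = δ·I with δ > 0, ∇² log p(x) = δ⁻² Cov(μ_x) − δ⁻¹ I. -/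

import Mathlib

/-!
Write `g(x, y) = exp(-½ (x - y)ᵀ Σ⁻¹ (x - y))`, so that `∂ᵥ g(x, y) = ⟨Σ⁻¹ (y - x), v⟩ g(x, y)`;
since `μ` has compact support, we may differentiate under the integral sign. Dividing by `p(x)`
turns integrals against `g(x, ·) μ` into expectations under `μₓ`, so
`∂ᵥ log p(x) = ⟨Σ⁻¹ (E_{μₓ}[y] - x), v⟩`, and the quotient rule gives
`∂ᵥ E_{μₓ}[f] = Cov_{μₓ}(f, ⟨Σ⁻¹ y, v⟩)`. Hence
`∂_w ∂ᵥ log p(x) = Cov_{μₓ}(⟨Σ⁻¹ y, v⟩, ⟨Σ⁻¹ y, w⟩) - ⟨Σ⁻¹ w, v⟩`, and bilinearity of the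
covariance identifies this with the entries of `Σ⁻¹ Cov(μₓ) Σ⁻¹ - Σ⁻¹`.
-/

open MeasureTheory Set Matrix

noncomputable section

/-- The (unnormalized) Gaussian-mixture density `p(x) = ∫ exp(-½(x-y)ᵀΣ⁻¹(x-y)) dμ(y)`. -/
def gmP {d : ℕ} (μ : Measure (Fin d → ℝ)) (S : Matrix (Fin d) (Fin d) ℝ)
    (x : Fin d → ℝ) : ℝ :=
  ∫ y, Real.exp (-(1/2) * ((x - y) ⬝ᵥ (S⁻¹ *ᵥ (x - y)))) ∂μ

/-- The tilted mixing measure `μ_x`, with density proportional to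
`exp(-½(x-y)ᵀΣ⁻¹(x-y))` with respect to `μ`. -/
def gmTilt {d : ℕ} (μ : Measure (Fin d → ℝ)) (S : Matrix (Fin d) (Fin d) ℝ)
    (x : Fin d → ℝ) : Measure (Fin d → ℝ) :=
  ((μ.withDensity fun y =>
      ENNReal.ofReal (Real.exp (-(1/2) * ((x - y) ⬝ᵥ (S⁻¹ *ᵥ (x - y)))))) univ)⁻¹ •
    μ.withDensity fun y =>
      ENNReal.ofReal (Real.exp (-(1/2) * ((x - y) ⬝ᵥ (S⁻¹ *ᵥ (x - y)))))

/-- Entries of the covariance matrix of a measure on `ℝ^d`. -/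
def covE {d : ℕ} (μ : Measure (Fin d → ℝ)) (i j : Fin d) : ℝ :=
  (∫ y, y i * y j ∂μ) - (∫ y, y i ∂μ) * (∫ y, y j ∂μ)

/-- The covariance matrix of a measure on `ℝ^d`. -/
def covM {d : ℕ} (μ : Measure (Fin d → ℝ)) : Matrix (Fin d) (Fin d) ℝ :=
  Matrix.of fun i j => covE μ i j

open ProbabilityTheory

section CompactlySupported

variable {α : Type*} [TopologicalSpace α] [T2Space α] [MeasurableSpace α] [OpensMeasurableSpace α]
  {μ : Measure α} [IsFiniteMeasure μ] {K : Set α}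

lemma memLp_of_isCompact_of_compl_null {E : Type*} [NormedAddCommGroup E] {f : α → E}
    (hK : IsCompact K) (hμK : μ Kᶜ = 0) (hf : ContinuousOn f K) (p : ENNReal) :
    MemLp f p μ := by
  have hμ : μ.restrict K = μ := Measure.restrict_eq_self_of_ae_mem (mem_ae_iff.2 hμK)
  obtain ⟨C, hC⟩ := hK.exists_bound_of_continuousOn hf
  rw [← hμ]
  exact MemLp.of_bound (hf.aestronglyMeasurable_of_isCompact hK hK.measurableSet) C
    ((ae_restrict_mem hK.measurableSet).mono hC)

lemma integrable_of_isCompact_of_compl_null {E : Type*} [NormedAddCommGroup E] {f : α → E}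
    (hK : IsCompact K) (hμK : μ Kᶜ = 0) (hf : ContinuousOn f K) : Integrable f μ :=
  memLp_one_iff_integrable.1 (memLp_of_isCompact_of_compl_null hK hμK hf 1)

theorem hasFDerivAt_integral_of_isCompact_of_compl_null {H G : Type*} [NormedAddCommGroup H]
    [NormedSpace ℝ H] [ProperSpace H] [NormedAddCommGroup G] [NormedSpace ℝ G]
    (hK : IsCompact K) (hμK : μ Kᶜ = 0) {F : H → α → G} {F' : H → α → H →L[ℝ] G}
    (hF : ∀ x, Continuous (F x)) (hF' : Continuous fun q : H × α => F' q.1 q.2)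
    (hdiff : ∀ x y, HasFDerivAt (F · y) (F' x y) x) (x₀ : H) :
    HasFDerivAt (fun x => ∫ y, F x y ∂μ) (∫ y, F' x₀ y ∂μ) x₀ := by
  obtain ⟨C, hC⟩ :=
    ((isCompact_closedBall x₀ 1).prod hK).exists_bound_of_continuousOn hF'.continuousOn
  refine hasFDerivAt_integral_of_dominated_of_fderiv_le (bound := fun _ => C)
    (Metric.ball_mem_nhds x₀ one_pos)
    (.of_forall fun x => (integrable_of_isCompact_of_compl_null hK hμK
      (hF x).continuousOn).aestronglyMeasurable)
    (integrable_of_isCompact_of_compl_null hK hμK (hF x₀).continuousOn)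
    (integrable_of_isCompact_of_compl_null hK hμK
      (hF'.comp (Continuous.prodMk_right x₀)).continuousOn).aestronglyMeasurable
    ?_ (integrable_const C) (.of_forall fun y x _ => hdiff x y)
  filter_upwards [mem_ae_iff.2 hμK] with y hy x hx
  exact hC (x, y) ⟨Metric.ball_subset_closedBall hx, hy⟩

end CompactlySupported

def dotProductCLM {ι : Type*} [Fintype ι] : (ι → ℝ) →L[ℝ] (ι → ℝ) →L[ℝ] ℝ :=
  LinearMap.toContinuousLinearMap
    (LinearMap.toContinuousLinearMap.toLinearMap ∘ₗ dotProductBilin ℝ ℝ)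

@[simp]
lemma dotProductCLM_apply {ι : Type*} [Fintype ι] (w v : ι → ℝ) : dotProductCLM w v = w ⬝ᵥ v :=
  rfl

section Covariance

variable {d : ℕ} {ν : Measure (Fin d → ℝ)} [IsProbabilityMeasure ν]

lemma covE_eq_covariance (h : ∀ k, MemLp (fun y => y k) 2 ν) (i j : Fin d) :
    covE ν i j = cov[fun y => y i, fun y => y j; ν] :=
  (covariance_eq_sub (h i) (h j)).symm

lemma covariance_mulVec_apply {m n : Type*} [Fintype m] [Fintype n]
    (h : ∀ k, MemLp (fun y => y k) 2 ν) (A : Matrix m (Fin d) ℝ) (B : Matrix n (Fin d) ℝ)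
    (i : m) (j : n) :
    cov[fun y => (A *ᵥ y) i, fun y => (B *ᵥ y) j; ν] = (A * covM ν * Bᵀ) i j := by
  simp only [mulVec, dotProduct]
  rw [covariance_fun_sum_fun_sum (fun k => (h k).const_mul _) (fun l => (h l).const_mul _)]
  simp only [covariance_const_mul_left, covariance_const_mul_right, ← covE_eq_covariance h,
    mul_apply, transpose_apply, covM, of_apply, Finset.sum_mul]
  rw [Finset.sum_comm]
  exact Finset.sum_congr rfl fun k _ => Finset.sum_congr rfl fun l _ => by ring

end Covariance

section GaussianMixture

variable {d : ℕ} {μ : Measure (Fin d → ℝ)} {S : Matrix (Fin d) (Fin d) ℝ} {K : Set (Fin d → ℝ)}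

def gaussKernel (S : Matrix (Fin d) (Fin d) ℝ) (x y : Fin d → ℝ) : ℝ :=
  Real.exp (-(1/2) * ((x - y) ⬝ᵥ (S⁻¹ *ᵥ (x - y))))

lemma gaussKernel_pos (x y : Fin d → ℝ) : 0 < gaussKernel S x y := Real.exp_pos _

@[fun_prop]
lemma continuous_gaussKernel (S : Matrix (Fin d) (Fin d) ℝ) :
    Continuous fun q : (Fin d → ℝ) × (Fin d → ℝ) => gaussKernel S q.1 q.2 := by
  unfold gaussKernel
  fun_prop

lemma hasFDerivAt_gaussKernel (hS : S⁻¹.IsSymm) (x y : Fin d → ℝ) :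
    HasFDerivAt (gaussKernel S · y) (gaussKernel S x y • dotProductCLM (S⁻¹ *ᵥ (y - x))) x := by
  let M : (Fin d → ℝ) →L[ℝ] (Fin d → ℝ) := LinearMap.toContinuousLinearMap (toLin' S⁻¹)
  have hsub : HasFDerivAt (fun x : Fin d → ℝ => x - y) (ContinuousLinearMap.id ℝ _) x :=
    (hasFDerivAt_id x).sub_const y
  have hquad := dotProductCLM.hasFDerivAt_of_bilinear hsub (M.hasFDerivAt.comp x hsub)
  refine ((hquad.const_mul (-(1/2) : ℝ)).exp).congr_fderiv ?_
  ext v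
  have hsymm : (x - y) ⬝ᵥ (S⁻¹ *ᵥ v) = (S⁻¹ *ᵥ (x - y)) ⬝ᵥ v := by
    rw [dotProduct_mulVec, ← mulVec_transpose, hS.eq]
  rw [← neg_sub x y, mulVec_neg]
  simp only [M, gaussKernel, LinearMap.coe_toContinuousLinearMap', Function.comp_apply,
    toLin'_apply, dotProductCLM_apply, ContinuousLinearMap.precompR_apply,
    ContinuousLinearMap.comp_id, ContinuousLinearMap.compL_apply, _root_.add_apply,
    _root_.neg_apply, _root_.smul_apply, ContinuousLinearMap.comp_apply, smul_eq_mul,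
    ContinuousLinearMap.precompL_apply, ContinuousLinearMap.id_apply, map_neg, hsymm,
    dotProduct_comm v]
  ring

lemma gmP_pos [NeZero μ] {x : Fin d → ℝ} (hint : Integrable (gaussKernel S x) μ) :
    0 < gmP μ S x :=
  integral_exp_pos hint

lemma gmTilt_eq_tilted [NeZero μ] {x : Fin d → ℝ} (hint : Integrable (gaussKernel S x) μ) :
    gmTilt μ S x = μ.tilted fun y => -(1/2) * ((x - y) ⬝ᵥ (S⁻¹ *ᵥ (x - y))) := by
  have hmass : (μ.withDensity fun y => ENNReal.ofReal (gaussKernel S x y)) univ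
      = ENNReal.ofReal (gmP μ S x) := by
    rw [withDensity_apply _ MeasurableSet.univ, Measure.restrict_univ,
      ← ofReal_integral_eq_lintegral_ofReal hint (.of_forall fun y => (gaussKernel_pos x y).le)]
    rfl
  have hdensity : (fun y => ENNReal.ofReal (gaussKernel S x y / gmP μ S x))
      = (ENNReal.ofReal (gmP μ S x))⁻¹ • fun y => ENNReal.ofReal (gaussKernel S x y) := by
    ext y
    rw [div_eq_mul_inv, ENNReal.ofReal_mul (gaussKernel_pos x y).le,
      ENNReal.ofReal_inv_of_pos (gmP_pos hint), Pi.smul_apply, smul_eq_mul, mul_comm]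
  change _ = μ.withDensity fun y => ENNReal.ofReal (gaussKernel S x y / gmP μ S x)
  rw [hdensity, withDensity_smul' _ _ (ENNReal.inv_ne_top.2 (by simpa using gmP_pos hint))]
  exact congrArg (· • _) (congrArg _ hmass)

lemma integral_gmTilt [NeZero μ] {x : Fin d → ℝ} (hint : Integrable (gaussKernel S x) μ)
    (f : (Fin d → ℝ) → ℝ) :
    ∫ y, f y ∂(gmTilt μ S x) = (gmP μ S x)⁻¹ * ∫ y, f y * gaussKernel S x y ∂μ := by
  rw [gmTilt_eq_tilted hint, integral_tilted, ← integral_const_mul]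
  refine integral_congr_ae (.of_forall fun y => ?_)
  change gaussKernel S x y / gmP μ S x * f y = _
  ring

lemma isProbabilityMeasure_gmTilt [NeZero μ] {x : Fin d → ℝ}
    (hint : Integrable (gaussKernel S x) μ) : IsProbabilityMeasure (gmTilt μ S x) :=
  gmTilt_eq_tilted hint ▸ isProbabilityMeasure_tilted hint

variable [IsFiniteMeasure μ]

lemma integrable_gaussKernel (hK : IsCompact K) (hμK : μ Kᶜ = 0) (S : Matrix (Fin d) (Fin d) ℝ)
    (x : Fin d → ℝ) : Integrable (gaussKernel S x) μ :=
  integrable_of_isCompact_of_compl_null hK hμK (by fun_prop : Continuous _).continuousOn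

variable [NeZero μ]

lemma memLp_gmTilt (hK : IsCompact K) (hμK : μ Kᶜ = 0) {x : Fin d → ℝ} {f : (Fin d → ℝ) → ℝ}
    (hf : Continuous f) (p : ENNReal) : MemLp f p (gmTilt μ S x) := by
  have := isProbabilityMeasure_gmTilt (integrable_gaussKernel hK hμK S x)
  refine memLp_of_isCompact_of_compl_null hK ?_ hf.continuousOn p
  rw [gmTilt_eq_tilted (integrable_gaussKernel hK hμK S x)]
  exact tilted_absolutelyContinuous μ _ hμK

lemma hasFDerivAt_integral_mul_gaussKernel (hS : S⁻¹.IsSymm) (hK : IsCompact K)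
    (hμK : μ Kᶜ = 0) {f : (Fin d → ℝ) → ℝ} (hf : Continuous f) (x : Fin d → ℝ) :
    ∃ D : (Fin d → ℝ) →L[ℝ] ℝ, HasFDerivAt (fun z => ∫ y, f y * gaussKernel S z y ∂μ) D x ∧
      ∀ v, D v = gmP μ S x * ∫ y, f y * ((S⁻¹ *ᵥ (y - x)) ⬝ᵥ v) ∂(gmTilt μ S x) := by
  refine ⟨_, hasFDerivAt_integral_of_isCompact_of_compl_null hK hμK
    (F := fun z y => f y * gaussKernel S z y)
    (F' := fun z y => (f y * gaussKernel S z y) • dotProductCLM (S⁻¹ *ᵥ (y - z)))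
    (fun z => by fun_prop) (by fun_prop) (fun z y => ?_) x, fun v => ?_⟩
  · simpa only [smul_smul] using (hasFDerivAt_gaussKernel hS z y).const_mul (f y)
  · rw [ContinuousLinearMap.integral_apply (integrable_of_isCompact_of_compl_null hK hμK
      (by fun_prop : Continuous fun y => (f y * gaussKernel S x y) •
        dotProductCLM (S⁻¹ *ᵥ (y - x))).continuousOn),
      integral_gmTilt (integrable_gaussKernel hK hμK S x),
      mul_inv_cancel_left₀ (gmP_pos (integrable_gaussKernel hK hμK S x)).ne']
    refine integral_congr_ae (.of_forall fun y => ?_)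
    simp only [_root_.smul_apply, dotProductCLM_apply, smul_eq_mul]
    ring

lemma hasFDerivAt_gmP (hS : S⁻¹.IsSymm) (hK : IsCompact K) (hμK : μ Kᶜ = 0)
    (x : Fin d → ℝ) :
    ∃ D : (Fin d → ℝ) →L[ℝ] ℝ, HasFDerivAt (gmP μ S) D x ∧
      ∀ v, D v = gmP μ S x * ∫ y, (S⁻¹ *ᵥ (y - x)) ⬝ᵥ v ∂(gmTilt μ S x) := by
  have := hasFDerivAt_integral_mul_gaussKernel (μ := μ) hS hK hμK continuous_const
    (f := fun _ => 1) x
  simp only [one_mul] at this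
  exact this

lemma fderiv_log_gmP_apply (hS : S⁻¹.IsSymm) (hK : IsCompact K) (hμK : μ Kᶜ = 0)
    (x v : Fin d → ℝ) :
    fderiv ℝ (fun z => Real.log (gmP μ S z)) x v
      = ∫ y, (S⁻¹ *ᵥ y) ⬝ᵥ v ∂(gmTilt μ S x) - (S⁻¹ *ᵥ x) ⬝ᵥ v := by
  have hint := integrable_gaussKernel hK hμK S x
  have := isProbabilityMeasure_gmTilt hint
  obtain ⟨D, hD, hDv⟩ := hasFDerivAt_gmP hS hK hμK x
  rw [(hD.log (gmP_pos hint).ne').fderiv, _root_.smul_apply, hDv, smul_eq_mul,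
    inv_mul_cancel_left₀ (gmP_pos hint).ne']
  simp_rw [mulVec_sub, sub_dotProduct]
  rw [integral_sub ((memLp_gmTilt hK hμK (by fun_prop) 1).integrable le_rfl) (integrable_const _),
    integral_const, probReal_univ, one_smul]

lemma hasFDerivAt_integral_gmTilt (hS : S⁻¹.IsSymm) (hK : IsCompact K) (hμK : μ Kᶜ = 0)
    {f : (Fin d → ℝ) → ℝ} (hf : Continuous f) (x : Fin d → ℝ) :
    ∃ D : (Fin d → ℝ) →L[ℝ] ℝ, HasFDerivAt (fun z => ∫ y, f y ∂(gmTilt μ S z)) D x ∧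
      ∀ v, D v = cov[f, fun y => (S⁻¹ *ᵥ y) ⬝ᵥ v; gmTilt μ S x] := by
  have hint := integrable_gaussKernel hK hμK S x
  have := isProbabilityMeasure_gmTilt hint
  have hP := (gmP_pos hint).ne'
  obtain ⟨D₁, hD₁, hD₁v⟩ := hasFDerivAt_gmP hS hK hμK x
  obtain ⟨D, hD, hDv⟩ := hasFDerivAt_integral_mul_gaussKernel (μ := μ) hS hK hμK hf x
  have hmean : (fun z => ∫ y, f y ∂(gmTilt μ S z))
      = fun z => (gmP μ S z)⁻¹ * ∫ y, f y * gaussKernel S z y ∂μ :=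
    funext fun z => integral_gmTilt (integrable_gaussKernel hK hμK S z) f
  refine ⟨_, by rw [hmean]; exact ((hasDerivAt_inv hP).comp_hasFDerivAt x hD₁).mul hD,
    fun v => ?_⟩
  have hmemLp : ∀ {g : (Fin d → ℝ) → ℝ}, Continuous g → MemLp g 2 (gmTilt μ S x) :=
    fun hg => memLp_gmTilt hK hμK hg 2
  rw [← covariance_sub_const_right ((hmemLp (by fun_prop)).integrable one_le_two)
      ((S⁻¹ *ᵥ x) ⬝ᵥ v), covariance_eq_sub (hmemLp hf) (hmemLp (by fun_prop))]
  simp_rw [_root_.add_apply, Function.comp_apply, _root_.smul_apply, smul_eq_mul, hDv, hD₁v,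
    Pi.mul_apply, mulVec_sub, sub_dotProduct]
  have hNf : ∫ y, f y * gaussKernel S x y ∂μ = gmP μ S x * ∫ y, f y ∂(gmTilt μ S x) := by
    rw [integral_gmTilt hint, mul_inv_cancel_left₀ hP]
  rw [hNf]
  field_simp
  ring

lemma fderiv_fderiv_log_gmP_apply (hS : S⁻¹.IsSymm) (hK : IsCompact K) (hμK : μ Kᶜ = 0)
    (x v w : Fin d → ℝ) :
    fderiv ℝ (fun z => fderiv ℝ (fun z => Real.log (gmP μ S z)) z v) x w
      = cov[fun y => (S⁻¹ *ᵥ y) ⬝ᵥ v, fun y => (S⁻¹ *ᵥ y) ⬝ᵥ w; gmTilt μ S x]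
        - (S⁻¹ *ᵥ w) ⬝ᵥ v := by
  obtain ⟨D, hD, hDv⟩ := hasFDerivAt_integral_gmTilt hS hK hμK
    (f := fun y => (S⁻¹ *ᵥ y) ⬝ᵥ v) (by fun_prop) x
  have hlin : HasFDerivAt (fun z => (S⁻¹ *ᵥ z) ⬝ᵥ v) (dotProductCLM (v ᵥ* S⁻¹)) x := by
    convert (dotProductCLM (v ᵥ* S⁻¹)).hasFDerivAt using 2 with z
    rw [dotProductCLM_apply, ← dotProduct_mulVec, dotProduct_comm]
  rw [funext (fderiv_log_gmP_apply hS hK hμK · v), (hD.fun_sub hlin).fderiv, _root_.sub_apply,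
    hDv, dotProductCLM_apply, ← dotProduct_mulVec, dotProduct_comm]

end GaussianMixture

/-- **Hessian of a Gaussian-mixture log-density.**  For a compactly supported mixing measure
`μ` and symmetric positive definite `Σ`,
`∇² log p(x) = Σ⁻¹ (Cov(μ_x) Σ⁻¹ - I)`; in particular, for isotropic `Σ = δ·I`,
`∇² log p(x) = δ⁻² Cov(μ_x) - δ⁻¹ I`. -/
theorem gaussian_mixture_hessian
    (d : ℕ) (μ : Measure (Fin d → ℝ)) [IsProbabilityMeasure μ]
    (hsupp : ∃ K : Set (Fin d → ℝ), IsCompact K ∧ μ Kᶜ = 0)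
    (S : Matrix (Fin d) (Fin d) ℝ) (hS : S.PosDef) :
    (∀ (x : Fin d → ℝ) (i j : Fin d),
      fderiv ℝ (fun y => fderiv ℝ (fun z => Real.log (gmP μ S z)) y (Pi.single j 1)) x
          (Pi.single i 1) =
        (S⁻¹ * (covM (gmTilt μ S x) * S⁻¹ - 1)) i j) ∧
    (∀ δ : ℝ, 0 < δ → S = δ • (1 : Matrix (Fin d) (Fin d) ℝ) →
      ∀ (x : Fin d → ℝ) (i j : Fin d),
        fderiv ℝ (fun y => fderiv ℝ (fun z => Real.log (gmP μ S z)) y (Pi.single j 1)) x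
            (Pi.single i 1) =
          δ⁻¹ * δ⁻¹ * covE (gmTilt μ S x) i j - (if i = j then δ⁻¹ else 0)) := by
  obtain ⟨K, hK, hμK⟩ := hsupp
  have hA : S⁻¹.IsSymm := (isHermitian_iff_isSymm.1 hS.isHermitian).inv
  have hess (x : Fin d → ℝ) (i j : Fin d) :
      fderiv ℝ (fun y => fderiv ℝ (fun z => Real.log (gmP μ S z)) y (Pi.single j 1)) x
          (Pi.single i 1) = (S⁻¹ * (covM (gmTilt μ S x) * S⁻¹ - 1)) i j := by
    have := isProbabilityMeasure_gmTilt (integrable_gaussKernel hK hμK S x)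
    rw [fderiv_fderiv_log_gmP_apply hA hK hμK, covariance_comm]
    simp only [dotProduct_single, mul_one]
    rw [covariance_mulVec_apply (fun k => memLp_gmTilt hK hμK (continuous_apply k) 2)]
    simp [Matrix.mul_sub, Matrix.mul_assoc, hA.eq, hA.apply]
  refine ⟨hess, fun δ hδ hSδ x i j => ?_⟩
  have hinv : S⁻¹ = δ⁻¹ • (1 : Matrix (Fin d) (Fin d) ℝ) := by
    rw [hSδ]
    exact inv_eq_left_inv (by rw [smul_mul_smul, Matrix.one_mul, inv_mul_cancel₀ hδ.ne', one_smul])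
  rw [hess, hinv]
  simp only [Matrix.mul_sub, Matrix.smul_mul, Matrix.mul_smul, Matrix.one_mul, Matrix.mul_one,
    Matrix.sub_apply, Matrix.smul_apply, one_apply, covM, of_apply, smul_eq_mul]
  split_ifs <;> ring
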